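/- arXiv:1404.0816 — 11 statements merged into one kernel-verified Lean document; each statement's English description precedes it below -/
import Mathlib

section
/- For a pocrim P the following are equivalent: (1) P is a hoop, i.e. P satisfies x + (x → y) = y + (y → x) for all x, y; (2) P is naturally ordered, i.e. for every x, y with x ≥ y there exists z with x = y + z; (3) for every x, y with x ≥ y one has x = y + (y → x); (4) P satisfies x + (x → y) ≥ y + (y → x) for all x, y. -/
/-- A pocrim structure on a carrier `P` with distinguished element `zero`,
addition `add` and implication/residual `imp`.  Here `imp x y = zero`
expresses `x ≥ y` (ordering by increasing logical strength). -/
structure IsPocrim {P : Type*} (zero : P) (add : P → P → P) (imp : P → P → P) : Prop where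
  add_assoc : ∀ x y z : P, add (add x y) z = add x (add y z)
  add_comm : ∀ x y : P, add x y = add y x
  add_zero : ∀ x : P, add x zero = x
  ge_refl : ∀ x : P, imp x x = zero
  ge_trans : ∀ x y z : P, imp x y = zero → imp y z = zero → imp x z = zero
  ge_antisymm : ∀ x y : P, imp x y = zero → imp y x = zero → x = y
  add_mono : ∀ x y z : P, imp x y = zero → imp (add x z) (add y z) = zero
  ge_zero : ∀ x : P, imp x zero = zero
  residuation : ∀ x y z : P, imp (add x y) z = zero ↔ imp x (imp y z) = zero

/-- A hoop is a pocrim satisfying commutativity of weak conjunction. -/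
def IsHoop {P : Type*} (zero : P) (add : P → P → P) (imp : P → P → P) : Prop :=
  IsPocrim zero add imp ∧ ∀ x y : P, add x (imp x y) = add y (imp y x)

/-- For a pocrim the following are equivalent: (1) it is a hoop;
(2) it is naturally ordered; (3) whenever x ≥ y, x = y + (y → x);
(4) x + (x → y) ≥ y + (y → x) for all x, y. -/
theorem pocrim_hoop_tfae {P : Type*} (zero : P) (add imp : P → P → P)
    (hP : IsPocrim zero add imp) :
    List.TFAE
      [ ∀ x y : P, add x (imp x y) = add y (imp y x),
        ∀ x y : P, imp x y = zero → ∃ z : P, x = add y z,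
        ∀ x y : P, imp x y = zero → x = add y (imp y x),
        ∀ x y : P, imp (add x (imp x y)) (add y (imp y x)) = zero ] := by
  -- basic facts
  have hL1 : ∀ x z : P, imp (add x z) x = zero := by
    intro x z
    have h0 : imp (add z x) (add zero x) = zero :=
      hP.add_mono z zero x (hP.ge_zero z)
    have : add zero x = x := by rw [hP.add_comm, hP.add_zero]
    rw [hP.add_comm x z]
    rwa [this] at h0
  have hL2 : ∀ x y : P, imp (add y (imp y x)) x = zero := by
    intro x y
    rw [hP.add_comm]
    exact (hP.residuation _ _ _).mpr (hP.ge_refl (imp y x))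
  tfae_have 1 → 3
  · intro h x y hxy
    have := h x y
    rwa [hxy, hP.add_zero] at this
  tfae_have 3 → 2
  · intro h x y hxy
    exact ⟨imp y x, h x y hxy⟩
  tfae_have 2 → 4
  · intro h x y
    have hay : imp (add x (imp x y)) y = zero := hL2 y x
    obtain ⟨z, hz⟩ := h _ _ hay
    have hz' : imp z (imp y x) = zero := by
      apply (hP.residuation z y x).mp
      have : add z y = add x (imp x y) := by rw [hP.add_comm, ← hz]
      rw [this]
      exact hL1 x (imp x y)
    have := hP.add_mono z (imp y x) y hz'
    rw [hP.add_comm z y, hP.add_comm (imp y x) y] at this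
    rwa [hz]
  tfae_have 4 → 1
  · intro h x y
    exact hP.ge_antisymm _ _ (h x y) (h y x)
  tfae_finish
end

section
/- Completeness of AL_m for pocrims: if a formula A satisfies v_α(A) = 0 for every pocrim P and every assignment α from the variables and the constant 1 to P, then A is provable in AL_m. -/
/-- Formulas of the language L: countably many variables, the constant 1,
conjunction ⊗ and implication ⊸. -/
inductive Fm : Type where
  | var : ℕ → Fm
  | one : Fm
  | tens : Fm → Fm → Fm
  | imp : Fm → Fm → Fm

/-- Provability in minimal affine logic AL_m: the axiom schemata
(Comp), (Comm), (Curry), (Uncurry), (Wk), closed under modus ponens. -/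
inductive ALm : Fm → Prop where
  | comp (A B C : Fm) : ALm ((A.imp B).imp ((B.imp C).imp (A.imp C)))
  | comm (A B : Fm) : ALm ((A.tens B).imp (B.tens A))
  | curry (A B C : Fm) : ALm (((A.tens B).imp C).imp (A.imp (B.imp C)))
  | uncurry (A B C : Fm) : ALm ((A.imp (B.imp C)).imp ((A.tens B).imp C))
  | wk (A B : Fm) : ALm ((A.tens B).imp A)
  | mp (A B : Fm) : ALm A → ALm (A.imp B) → ALm B

/-- The value of a formula in a pocrim, given an assignment `α` to the
variables and a value `o` for the constant 1. -/
def Fm.val {P : Type*} (add imp : P → P → P) (α : ℕ → P) (o : P) : Fm → P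
  | .var n => α n
  | .one => o
  | .tens A B => add (A.val add imp α o) (B.val add imp α o)
  | .imp A B => imp (A.val add imp α o) (B.val add imp α o)

namespace ALmAux
open ALm

theorem compose {A B C : Fm} (h1 : ALm (A.imp B)) (h2 : ALm (B.imp C)) :
    ALm (A.imp C) := mp _ _ h2 (mp _ _ h1 (comp A B C))

theorem kk (A B : Fm) : ALm (A.imp (B.imp A)) := mp _ _ (wk A B) (curry A B A)

theorem pair (A B : Fm) : ALm (A.imp (B.imp (B.tens A))) :=
  mp _ _ (comm A B) (curry A B (B.tens A))

theorem exch {A B C : Fm} (h : ALm (A.imp (B.imp C))) : ALm (B.imp (A.imp C)) :=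
  mp _ _ (compose (comm B A) (mp _ _ h (uncurry A B C))) (curry B A C)

theorem of_thm {B : Fm} (h : ALm B) (A : Fm) : ALm (A.imp B) := mp _ _ h (kk B A)

theorem ident (A : Fm) : ALm (A.imp A) := by
  set W : Fm := (Fm.one.tens Fm.one).imp Fm.one with hW
  have hw : ALm W := wk _ _
  have h1 : ALm (A.imp (W.tens A)) := mp _ _ hw (exch (pair A W))
  have h2 : ALm ((W.tens A).imp A) := compose (comm W A) (wk A W)
  exact compose h1 h2

def T : Fm := Fm.one.imp Fm.one
theorem thmT : ALm T := ident Fm.one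

theorem prefix_mono {X Y : Fm} (Z : Fm) (h : ALm (X.imp Y)) :
    ALm ((Z.imp X).imp (Z.imp Y)) := mp _ _ h (exch (comp Z X Y))

theorem suffix_mono {X Y : Fm} (Z : Fm) (h : ALm (X.imp Y)) :
    ALm ((Y.imp Z).imp (X.imp Z)) := mp _ _ h (comp X Y Z)

theorem tens_mono_left {A B : Fm} (C : Fm) (h : ALm (A.imp B)) :
    ALm ((A.tens C).imp (B.tens C)) :=
  mp _ _ (compose h (exch (pair C B))) (uncurry A C (B.tens C))

theorem tens_mono {A A' B B' : Fm} (h1 : ALm (A.imp A')) (h2 : ALm (B.imp B')) :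
    ALm ((A.tens B).imp (A'.tens B')) :=
  compose (tens_mono_left B h1) (compose (comm A' B)
    (compose (tens_mono_left A' h2) (comm B' A')))

theorem imp_mono {A A' B B' : Fm} (h1 : ALm (A'.imp A)) (h2 : ALm (B.imp B')) :
    ALm ((A.imp B).imp (A'.imp B')) :=
  compose (suffix_mono B h1) (prefix_mono A' h2)

theorem assoc1 (A B C : Fm) : ALm (((A.tens B).tens C).imp (A.tens (B.tens C))) := by
  set D : Fm := A.tens (B.tens C) with hD
  have h1 : ALm (A.imp ((B.tens C).imp D)) := exch (pair (B.tens C) A)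
  have h2 : ALm (A.imp (B.imp (C.imp D))) :=
    mp _ _ h1 (prefix_mono A (curry B C D))
  exact mp _ _ (mp _ _ h2 (uncurry A B (C.imp D))) (uncurry (A.tens B) C D)

theorem assoc2 (A B C : Fm) : ALm ((A.tens (B.tens C)).imp ((A.tens B).tens C)) := by
  set E : Fm := (A.tens B).tens C with hE
  have h1 : ALm ((A.tens B).imp (C.imp E)) := exch (pair C (A.tens B))
  have h2 : ALm (A.imp (B.imp (C.imp E))) := mp _ _ h1 (curry A B (C.imp E))
  have h3 : ALm (A.imp ((B.tens C).imp E)) := mp _ _ h2 (prefix_mono A (uncurry B C E))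
  exact mp _ _ h3 (uncurry A (B.tens C) E)

instance fmSetoid : Setoid Fm where
  r A B := ALm (A.imp B) ∧ ALm (B.imp A)
  iseqv := ⟨fun A => ⟨ident A, ident A⟩, fun h => ⟨h.2, h.1⟩,
    fun h1 h2 => ⟨compose h1.1 h2.1, compose h2.2 h1.2⟩⟩

abbrev Q := Quotient fmSetoid

def qadd : Q → Q → Q :=
  Quotient.map₂ Fm.tens fun _ _ ha _ _ hb => ⟨tens_mono ha.1 hb.1, tens_mono ha.2 hb.2⟩

def qimp : Q → Q → Q :=
  Quotient.map₂ Fm.imp fun _ _ ha _ _ hb => ⟨imp_mono ha.2 hb.1, imp_mono ha.1 hb.2⟩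

def qzero : Q := ⟦T⟧

@[simp] theorem qadd_mk (A B : Fm) : qadd ⟦A⟧ ⟦B⟧ = ⟦A.tens B⟧ := rfl
@[simp] theorem qimp_mk (A B : Fm) : qimp ⟦A⟧ ⟦B⟧ = ⟦A.imp B⟧ := rfl

theorem qimp_eq_zero {A B : Fm} : qimp ⟦A⟧ ⟦B⟧ = qzero ↔ ALm (A.imp B) := by
  constructor
  · intro h
    exact mp _ _ thmT (Quotient.exact h).2
  · intro h
    exact Quotient.sound ⟨of_thm thmT _, of_thm h _⟩

theorem equiv_of_both {A B : Fm} (h1 : ALm (A.imp B)) (h2 : ALm (B.imp A)) :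
    (⟦A⟧ : Q) = ⟦B⟧ := Quotient.sound ⟨h1, h2⟩

theorem q_pocrim : IsPocrim qzero qadd qimp := by
  constructor
  · intro x y z
    induction x using Quotient.inductionOn
    induction y using Quotient.inductionOn
    induction z using Quotient.inductionOn
    exact equiv_of_both (assoc1 _ _ _) (assoc2 _ _ _)
  · intro x y
    induction x using Quotient.inductionOn
    induction y using Quotient.inductionOn
    exact equiv_of_both (comm _ _) (comm _ _)
  · intro x
    induction x using Quotient.inductionOn with
    | _ A =>
      refine equiv_of_both (wk A T) ?_
      exact mp _ _ thmT (pair T A)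
  · intro x
    induction x using Quotient.inductionOn
    exact qimp_eq_zero.2 (ident _)
  · intro x y z
    induction x using Quotient.inductionOn
    induction y using Quotient.inductionOn
    induction z using Quotient.inductionOn
    simp only [qimp_mk]
    intro h1 h2
    exact qimp_eq_zero.2 (compose (qimp_eq_zero.1 h1) (qimp_eq_zero.1 h2))
  · intro x y
    induction x using Quotient.inductionOn
    induction y using Quotient.inductionOn
    simp only [qimp_mk]
    intro h1 h2
    exact equiv_of_both (qimp_eq_zero.1 h1) (qimp_eq_zero.1 h2)
  · intro x y z
    induction x using Quotient.inductionOn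
    induction y using Quotient.inductionOn
    induction z using Quotient.inductionOn
    simp only [qadd_mk, qimp_mk]
    intro h1
    exact qimp_eq_zero.2 (tens_mono_left _ (qimp_eq_zero.1 h1))
  · intro x
    induction x using Quotient.inductionOn
    exact qimp_eq_zero.2 (of_thm thmT _)
  · intro x y z
    induction x using Quotient.inductionOn
    induction y using Quotient.inductionOn
    induction z using Quotient.inductionOn
    exact ⟨fun h => qimp_eq_zero.2 (mp _ _ (qimp_eq_zero.1 h) (curry _ _ _)),
      fun h => qimp_eq_zero.2 (mp _ _ (qimp_eq_zero.1 h) (uncurry _ _ _))⟩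

end ALmAux

section Lift
universe u
open ALmAux

noncomputable def uadd : ULift.{u} Q → ULift.{u} Q → ULift.{u} Q :=
  fun x y => ⟨qadd x.down y.down⟩
noncomputable def uimp : ULift.{u} Q → ULift.{u} Q → ULift.{u} Q :=
  fun x y => ⟨qimp x.down y.down⟩
noncomputable def uzero : ULift.{u} Q := ⟨qzero⟩

theorem u_pocrim : IsPocrim uzero.{u} uadd.{u} uimp.{u} := by
  have H := q_pocrim
  have down_inj : ∀ x y : ULift.{u} Q, x.down = y.down → x = y := by
    intro x y h; cases x; cases y; simpa using h
  have imp_iff : ∀ x y : ULift.{u} Q,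
      (uimp x y = uzero ↔ qimp x.down y.down = qzero) := by
    intro x y
    constructor
    · intro h; exact congrArg ULift.down h
    · intro h; exact down_inj _ _ h
  constructor
  · intro x y z; exact down_inj _ _ (H.add_assoc _ _ _)
  · intro x y; exact down_inj _ _ (H.add_comm _ _)
  · intro x; exact down_inj _ _ (H.add_zero _)
  · intro x; exact (imp_iff _ _).2 (H.ge_refl _)
  · intro x y z h1 h2
    exact (imp_iff _ _).2 (H.ge_trans _ _ _ ((imp_iff _ _).1 h1) ((imp_iff _ _).1 h2))
  · intro x y h1 h2
    exact down_inj _ _ (H.ge_antisymm _ _ ((imp_iff _ _).1 h1) ((imp_iff _ _).1 h2))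
  · intro x y z h1
    exact (imp_iff _ _).2 (H.add_mono _ _ _ ((imp_iff _ _).1 h1))
  · intro x; exact (imp_iff _ _).2 (H.ge_zero _)
  · intro x y z
    exact (imp_iff _ _).trans ((H.residuation _ _ _).trans (imp_iff _ _).symm)

theorem uval_eq (A : Fm) :
    Fm.val uadd.{u} uimp.{u} (fun n => ⟨⟦Fm.var n⟧⟩) ⟨⟦Fm.one⟧⟩ A = ⟨⟦A⟧⟩ := by
  induction A with
  | var n => rfl
  | one => rfl
  | tens A B ihA ihB => simp [Fm.val, ihA, ihB, uadd]
  | imp A B ihA ihB => simp [Fm.val, ihA, ihB, uimp]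

end Lift

/-- Completeness of AL_m for pocrims: if the value of A is 0 under every
assignment of the variables and the constant 1 into every pocrim, then A is
provable in AL_m. -/
theorem ALm_complete {A : Fm}
    (h : ∀ (P : Type*) (zero : P) (add imp : P → P → P), IsPocrim zero add imp →
      ∀ (α : ℕ → P) (o : P), A.val add imp α o = zero) :
    ALm A := by
  have hv := h (ULift ALmAux.Q) uzero uadd uimp u_pocrim
    (fun n => ⟨⟦Fm.var n⟧⟩) ⟨⟦Fm.one⟧⟩
  rw [uval_eq] at hv
  have : (⟦A⟧ : ALmAux.Q) = ⟦ALmAux.T⟧ := congrArg ULift.down hv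
  exact ALm.mp _ _ ALmAux.thmT (Quotient.exact this).2
end

section
/- Every involutive hoop satisfies the identities x → y = ¬(x + ¬y) and x + y = ¬(x → ¬y). -/
/-- Currying: in any pocrim, `(x+y) → z = x → (y → z)`. -/
lemma pocrim_curry {P : Type*} {zero : P} {add imp : P → P → P}
    (hP : IsPocrim zero add imp) :
    ∀ x y z : P, imp (add x y) z = imp x (imp y z) := by
  intro x y z
  apply hP.ge_antisymm
  · set a := imp (add x y) z with ha
    rw [← hP.residuation, ← hP.residuation, hP.add_assoc,
        hP.residuation, ← ha]
    exact hP.ge_refl a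
  · set b := imp x (imp y z) with hb
    rw [← hP.residuation, ← hP.add_assoc, hP.residuation, hP.residuation]
    exact hP.ge_refl b

/-- Every involutive hoop satisfies x → y = ¬(x + ¬y) and x + y = ¬(x → ¬y),
where ¬x = x → 1 and 1 is the annihilator. -/
theorem involutive_hoop_identities {P : Type*} (zero one : P) (add imp : P → P → P)
    (hH : IsHoop zero add imp)
    (hann : ∀ x : P, add x one = one)
    (hinv : ∀ x : P, imp (imp x one) one = x) :
    ∀ x y : P,
      imp x y = imp (add x (imp y one)) one ∧
      add x y = imp (imp x (imp y one)) one := by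
  intro x y
  obtain ⟨hP, _⟩ := hH
  constructor
  · rw [pocrim_curry hP, hinv]
  · rw [← pocrim_curry hP, hinv]
end

section
/- If H is an involutive hoop and one defines x ⊕ y = x + y and ¬x = x → 1, then (H; 0, ⊕, ¬) is an MV-algebra: (H; 0, ⊕) is a commutative monoid, x ⊕ ¬0 = ¬0, ¬¬x = x, and, with x ⊖ y defined as ¬(¬x ⊕ y), (y ⊖ x) ⊕ x = (x ⊖ y) ⊕ y for all x, y. -/
/-- An MV-algebra structure: (M; 0, ⊕) is a commutative monoid and, with
x ⊖ y := ¬(¬x ⊕ y), the Łukasiewicz axioms hold. -/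
structure IsMV {M : Type*} (zero : M) (oplus : M → M → M) (neg : M → M) : Prop where
  add_assoc : ∀ x y z : M, oplus (oplus x y) z = oplus x (oplus y z)
  add_comm : ∀ x y : M, oplus x y = oplus y x
  add_zero : ∀ x : M, oplus x zero = x
  add_neg_zero : ∀ x : M, oplus x (neg zero) = neg zero
  neg_neg : ∀ x : M, neg (neg x) = x
  luk : ∀ x y : M, oplus (neg (oplus (neg y) x)) x = oplus (neg (oplus (neg x) y)) y

/-- If H is an involutive hoop then, with x ⊕ y := x + y and ¬x := x → 1,
the structure (H; 0, ⊕, ¬) is an MV-algebra. -/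
theorem involutive_hoop_isMV {P : Type*} (zero one : P) (add imp : P → P → P)
    (hH : IsHoop zero add imp)
    (hann : ∀ x : P, add x one = one)
    (hinv : ∀ x : P, imp (imp x one) one = x) :
    IsMV zero add (fun x => imp x one) := by
  obtain ⟨hp, hhoop⟩ := hH
  -- (a→b)+a ≥ b
  have L1 : ∀ a b : P, imp (add (imp a b) a) b = zero := fun a b =>
    (hp.residuation _ _ _).mpr (hp.ge_refl _)
  -- y + ¬y ≥ 1
  have hyny : ∀ y : P, imp (add y (imp y one)) one = zero := by
    intro y; rw [hp.add_comm]; exact L1 y one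
  -- key lemma: ¬(¬y + x) = x → y
  have K : ∀ x y : P, imp (add (imp y one) x) one = imp x y := by
    intro x y
    apply hp.ge_antisymm
    · -- ¬(¬y+x) ≥ x→y
      refine (hp.residuation _ _ _).mp ?_
      have h : imp (add (imp (add (imp y one) x) one) x) (imp (imp y one) one) = zero := by
        refine (hp.residuation _ _ _).mp ?_
        have h2 : imp (add (imp (add (imp y one) x) one) (add (imp y one) x)) one = zero :=
          (hp.residuation _ _ _).mpr (hp.ge_refl _)
        have e : add (add (imp (add (imp y one) x) one) x) (imp y one)
            = add (imp (add (imp y one) x) one) (add (imp y one) x) := by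
          rw [hp.add_assoc, hp.add_comm x (imp y one)]
        rw [e]; exact h2
      rw [hinv y] at h
      exact h
    · -- x→y ≥ ¬(¬y+x)
      refine (hp.residuation _ _ _).mp ?_
      have e : add (imp x y) (add (imp y one) x)
          = add (add (imp x y) x) (imp y one) := by
        rw [hp.add_assoc, hp.add_comm (imp y one) x]
      rw [e]
      exact hp.ge_trans _ _ _ (hp.add_mono _ _ _ (L1 x y)) (hyny y)
  have h0 : imp zero one = one := by
    have := hinv one
    rwa [hp.ge_refl one] at this
  refine ⟨hp.add_assoc, hp.add_comm, hp.add_zero, ?_, hinv, ?_⟩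
  · intro x; simp only [h0]; exact hann x
  · intro x y
    simp only [K]
    rw [hp.add_comm (imp x y) x, hp.add_comm (imp y x) y]
    exact hhoop x y
end

section
/- If M is an MV-algebra and one defines 1 = ¬0, x + y = x ⊕ y and x → y = ¬(x ⊕ ¬y), then (M; 0, +, →) is an involutive hoop with annihilator 1, and moreover x → 1 = ¬x for all x. -/
section MVHelpers

variable {M : Type*} {zero : M} {oplus : M → M → M} {neg : M → M}

lemma mv_zero_add (hM : IsMV zero oplus neg) (x : M) : oplus zero x = x := by
  rw [hM.add_comm, hM.add_zero]

lemma mv_refl (hM : IsMV zero oplus neg) (x : M) :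
    oplus (neg x) x = neg zero := by
  have h := hM.luk x (neg zero)
  rw [hM.neg_neg, mv_zero_add hM, hM.add_neg_zero] at h
  exact h

lemma mv_key (hM : IsMV zero oplus neg) {a b c : M}
    (h1 : oplus (neg a) b = neg zero) (h2 : oplus a c = neg zero) :
    oplus b c = neg zero := by
  have h := hM.luk a b
  rw [h1, hM.neg_neg, mv_zero_add hM] at h
  -- h : oplus (neg (oplus (neg b) a)) a = b
  calc oplus b c = oplus (neg (oplus (neg b) a)) (oplus a c) := by
        rw [← hM.add_assoc, h]
    _ = neg zero := by rw [h2, hM.add_neg_zero]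

end MVHelpers

/-- If M is an MV-algebra then, with 1 := ¬0, x + y := x ⊕ y and
x → y := ¬(x ⊕ ¬y), the structure (M; 0, +, →) is an involutive hoop with
annihilator 1, and moreover x → 1 = ¬x for all x. -/
theorem mv_isInvolutiveHoop {M : Type*} (zero : M) (oplus : M → M → M) (neg : M → M)
    (hM : IsMV zero oplus neg) :
    IsHoop zero oplus (fun x y => neg (oplus x (neg y))) ∧
    (∀ x : M, oplus x (neg zero) = neg zero) ∧
    (∀ x : M, (fun x y => neg (oplus x (neg y)))
        ((fun x y => neg (oplus x (neg y))) x (neg zero)) (neg zero) = x) ∧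
    (∀ x : M, (fun x y => neg (oplus x (neg y))) x (neg zero) = neg x) := by
  have Z := mv_zero_add hM
  have R := mv_refl hM
  have LC : ∀ a b c : M, oplus a (oplus b c) = oplus b (oplus a c) := by
    intro a b c
    rw [← hM.add_assoc, hM.add_comm a, hM.add_assoc]
  have negeq : ∀ t : M, t = neg zero → neg t = zero := by
    intro t h; rw [h, hM.neg_neg]
  have negeq' : ∀ t : M, neg t = zero → t = neg zero := by
    intro t h; rw [← hM.neg_neg t, h]
  refine ⟨⟨⟨hM.add_assoc, hM.add_comm, hM.add_zero, ?_, ?_, ?_, ?_, ?_, ?_⟩, ?_⟩,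
    hM.add_neg_zero, ?_, ?_⟩
  · -- ge_refl
    intro x
    apply negeq
    rw [hM.add_comm]
    exact R x
  · -- ge_trans
    intro x y z h1 h2
    replace h1 : oplus x (neg y) = neg zero := negeq' _ h1
    replace h2 : oplus y (neg z) = neg zero := negeq' _ h2
    apply negeq
    exact mv_key hM (by rw [hM.add_comm]; exact h1) h2
  · -- ge_antisymm
    intro x y h1 h2
    replace h1 : oplus x (neg y) = neg zero := negeq' _ h1
    replace h2 : oplus y (neg x) = neg zero := negeq' _ h2
    have h := hM.luk y x
    -- h : ¬(¬x⊕y)⊕y = ¬(¬y⊕x)⊕x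
    rw [hM.add_comm (neg y) x, h1, hM.neg_neg, Z] at h
    rw [hM.add_comm (neg x) y, h2, hM.neg_neg, Z] at h
    exact h.symm
  · -- add_mono
    intro x y z h
    replace h : oplus x (neg y) = neg zero := negeq' _ h
    apply negeq
    have key := mv_key hM (a := neg y) (b := oplus (neg (oplus y z)) z) (c := x)
      (by rw [hM.neg_neg]
          calc oplus y (oplus (neg (oplus y z)) z)
              = oplus (neg (oplus y z)) (oplus y z) := by
                simp only [hM.add_assoc, hM.add_comm, LC]
            _ = neg zero := R _)
      (by rw [hM.add_comm]; exact h)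
    calc oplus (oplus x z) (neg (oplus y z))
        = oplus (oplus (neg (oplus y z)) z) x := by
          simp only [hM.add_assoc, hM.add_comm, LC]
      _ = neg zero := key
  · -- ge_zero
    intro x
    show neg (oplus x (neg zero)) = zero
    rw [hM.add_neg_zero, hM.neg_neg]
  · -- residuation
    intro x y z
    constructor <;> intro h <;>
      simp only [hM.neg_neg, hM.add_assoc] at h ⊢ <;> exact h
  · -- hoop identity
    intro x y
    show oplus x (neg (oplus x (neg y))) = oplus y (neg (oplus y (neg x)))
    have h := hM.luk x y
    rw [hM.add_comm (neg y) x, hM.add_comm (neg x) y] at h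
    rw [hM.add_comm x, hM.add_comm y]
    exact h
  · -- involution
    intro x
    simp only [hM.neg_neg, hM.add_zero]
  · -- x → 1 = ¬x
    intro x
    simp only [hM.neg_neg, hM.add_zero]
end

section
/- Semi-cancellativity of totally ordered Wajsberg hoops (Ferreirim): let H be a Wajsberg hoop whose order ≥ is total, and let a, b ∈ H. If there exists u ∈ H with u ≥ a + b and u ≠ a + b, then b = a → (a + b); consequently, if also a + b = a + c for some c ∈ H, then b = c. -/
theorem wh_aux {P : Type*} (zero : P) (add imp : P → P → P)
    (hH : IsHoop zero add imp)
    (hW : ∀ x y : P, imp (imp x y) y = imp (imp y x) x)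
    (htot : ∀ x y : P, imp x y = zero ∨ imp y x = zero)
    (a b : P) (u : P) (hu : imp u (add a b) = zero) (hne : u ≠ add a b) :
    b = imp a (add a b) := by
  obtain ⟨hP, hD⟩ := hH
  -- add x y ≥ x
  have lemA : ∀ x y : P, imp (add x y) x = zero := by
    intro x y
    have h := hP.add_mono y zero x (hP.ge_zero y)
    rw [hP.add_comm zero x, hP.add_zero, hP.add_comm y x] at h
    exact h
  -- imp zero x = x
  have lemZ : ∀ x : P, imp zero x = x := by
    intro x
    have h := hD zero x
    rw [hP.ge_zero, hP.add_zero, hP.add_comm zero (imp zero x), hP.add_zero] at h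
    exact h
  set d := imp a (add a b) with hd
  have hbd : imp b d = zero := by
    rw [hd]
    refine (hP.residuation b a (add a b)).mp ?_
    rw [hP.add_comm b a]; exact hP.ge_refl _
  set c := imp d b with hc
  have hdc : add d c = b := by
    rw [hc, hD d b, hbd, hP.add_zero]
  have had1 : imp (add d a) (add a b) = zero := by
    refine (hP.residuation d a (add a b)).mpr ?_
    rw [← hd]; exact hP.ge_refl d
  have had2 : imp (add a b) (add d a) = zero := by
    have h := hP.add_mono b d a hbd
    rwa [hP.add_comm b a] at h
  have had : add a b = add d a := hP.ge_antisymm _ _ had2 had1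
  have habc : add (add a b) c = add a b := by
    rw [had, hP.add_comm d a, hP.add_assoc, hdc, had, hP.add_comm d a]
  set t := imp (add a b) u with ht
  have h1 : imp t (imp c t) = zero := by
    refine (hP.residuation t c t).mp ?_
    exact lemA t c
  have h2 : imp (imp c t) t = zero := by
    rw [ht]
    refine (hP.residuation (imp c t) (add a b) u).mp ?_
    -- imp (add (imp c t) (add a b)) u = zero
    have e1 : add (imp c t) (add a b) = add (add (imp c t) c) (add a b) := by
      conv_lhs => rw [← habc]
      rw [hP.add_comm (add a b) c, ← hP.add_assoc]
    have e2 : imp (add (imp c t) c) t = zero :=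
      (hP.residuation (imp c t) c t).mpr (hP.ge_refl (imp c t))
    have e3 : imp (add (add (imp c t) c) (add a b)) (add t (add a b)) = zero :=
      hP.add_mono _ _ _ e2
    have e4 : imp (add t (add a b)) u = zero := by
      refine (hP.residuation t (add a b) u).mpr ?_
      rw [← ht]; exact hP.ge_refl t
    rw [e1]
    exact hP.ge_trans _ _ _ e3 e4
  have hct : imp c t = t := hP.ge_antisymm _ _ h2 h1
  have hcz : c = zero := by
    rcases htot c t with h | h
    · exfalso
      rw [hct] at h
      exact hne (hP.ge_antisymm _ _ hu h)
    · have hw := hW c t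
      rw [hct, hP.ge_refl, h, lemZ] at hw
      exact hw.symm
  exact hP.ge_antisymm _ _ hbd (by rw [← hc, hcz])

/-- Semi-cancellativity of totally ordered Wajsberg hoops (Ferreirim):
if u ≥ a + b and u ≠ a + b, then b = a → (a + b); consequently if moreover
a + b = a + c then b = c. -/
theorem wajsberg_semi_cancellative {P : Type*} (zero : P) (add imp : P → P → P)
    (hH : IsHoop zero add imp)
    (hW : ∀ x y : P, imp (imp x y) y = imp (imp y x) x)
    (htot : ∀ x y : P, imp x y = zero ∨ imp y x = zero)
    (a b : P) (u : P) (hu : imp u (add a b) = zero) (hne : u ≠ add a b) :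
    b = imp a (add a b) ∧ ∀ c : P, add a b = add a c → b = c := by
  have hb := wh_aux zero add imp hH hW htot a b u hu hne
  refine ⟨hb, fun c hc => ?_⟩
  have hc' := wh_aux zero add imp hH hW htot a c u (hc ▸ hu) (hc ▸ hne)
  rw [hb, hc', hc]
end

section
/- If e is any element of a totally ordered Wajsberg hoop H, then either e → (e + e) = e, or e + e is an annihilator of H, i.e. x + (e + e) = e + e for every x ∈ H. -/
/-- If e is any element of a totally ordered Wajsberg hoop, then either
e → (e + e) = e, or e + e is an annihilator. -/
theorem wajsberg_idempotent_dichotomy {P : Type*} (zero : P) (add imp : P → P → P)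
    (hH : IsHoop zero add imp)
    (hW : ∀ x y : P, imp (imp x y) y = imp (imp y x) x)
    (htot : ∀ x y : P, imp x y = zero ∨ imp y x = zero)
    (e : P) :
    imp e (add e e) = e ∨ ∀ x : P, add x (add e e) = add e e := by
  classical
  obtain ⟨hP, hoop⟩ := hH
  have zero_add : ∀ x : P, add zero x = x := fun x => by
    rw [hP.add_comm]; exact hP.add_zero x
  have zero_imp : ∀ x : P, imp zero x = x := by
    intro x
    have h := hoop zero x
    rw [zero_add, hP.ge_zero, hP.add_zero] at h
    exact h
  have ge_add_left : ∀ x y : P, imp (add x y) y = zero := by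
    intro x y
    exact (hP.residuation x y y).mpr (by rw [hP.ge_refl]; exact hP.ge_zero x)
  have hoop_ineq : ∀ x y : P, imp (add x (imp x y)) y = zero := by
    intro x y
    rw [hP.add_comm]
    exact (hP.residuation (imp x y) x y).mpr (hP.ge_refl _)
  have mono : ∀ p q z : P, imp p q = zero → imp (imp z p) (imp z q) = zero := by
    intro p q z h
    apply (hP.residuation (imp z p) z q).mp
    exact hP.ge_trans _ p _ (by rw [hP.add_comm]; exact hoop_ineq z p) h
  have exchange : ∀ x y z : P, imp (add x y) z = imp x (imp y z) := by
    intro x y z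
    apply hP.ge_antisymm
    · apply (hP.residuation _ x (imp y z)).mp
      apply (hP.residuation _ y z).mp
      rw [hP.add_assoc]
      exact (hP.residuation _ (add x y) z).mpr (hP.ge_refl _)
    · apply (hP.residuation _ (add x y) z).mp
      rw [← hP.add_assoc]
      apply (hP.residuation _ y z).mpr
      exact (hP.residuation _ x (imp y z)).mpr (hP.ge_refl _)
  have hea : imp e (imp e (add e e)) = zero :=
    (hP.residuation e e (add e e)).mp (hP.ge_refl (add e e))
  by_cases hae : imp (imp e (add e e)) e = zero
  · left
    exact hP.ge_antisymm _ _ hae hea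
  · right
    have u_ge_e : imp (add e e) e = zero := ge_add_left e e
    have u_eq : add e (imp e (add e e)) = add e e := by
      have h := hoop e (add e e)
      rw [u_ge_e, hP.add_zero] at h
      exact h
    have he_ab : add (imp e (add e e)) (imp (imp e (add e e)) e) = e := by
      have h := hoop (imp e (add e e)) e
      rw [hea, hP.add_zero] at h
      exact h
    have key : ∀ x : P, imp (add e e) x = zero := by
      intro x
      rcases htot (add e e) x with h | hxu
      · exact h
      · have x_ge_e : imp x e = zero := hP.ge_trans _ _ _ hxu u_ge_e
        have hx_es : add e (imp e x) = x := by
          have h := hoop e x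
          rw [x_ge_e, hP.add_zero] at h
          exact h
        have s_ge_a : imp (imp e x) (imp e (add e e)) = zero := mono x (add e e) e hxu
        have hs_ac : add (imp e (add e e)) (imp (imp e (add e e)) (imp e x)) = imp e x := by
          have h := hoop (imp e (add e e)) (imp e x)
          rw [s_ge_a, hP.add_zero] at h
          exact h
        have c_eq : imp (add e e) x = imp (imp e (add e e)) (imp e x) := by
          rw [← exchange, hP.add_comm (imp e (add e e)) e, u_eq]
        rcases htot (imp (imp e (add e e)) e) (imp (add e e) x) with hbc | hcb
        · -- b ≥ c : then e ≥ s, so e+e ≥ x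
          have h0 : imp (imp (imp e (add e e)) e)
              (imp (imp e (add e e)) (imp e x)) = zero := by
            rw [← c_eq]; exact hbc
          have h1 := hP.add_mono _ _ (imp e (add e e)) h0
          rw [hP.add_comm (imp (imp e (add e e)) e),
              hP.add_comm (imp (imp e (add e e)) (imp e x)), he_ab, hs_ac] at h1
          have h2 := hP.add_mono e (imp e x) e h1
          rw [hP.add_comm (imp e x) e, hx_es] at h2
          exact h2
        · -- c ≥ b : contradiction with b ≠ 0
          exfalso
          have hcb' : imp (imp (imp e (add e e)) (imp e x))
              (imp (imp e (add e e)) e) = zero := by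
            rw [← c_eq]; exact hcb
          have hw := hW (imp (imp e (add e e)) e) (imp (imp e (add e e)) (imp e x))
          rw [hcb', zero_imp] at hw
          have hbg : add (imp (imp e (add e e)) e)
              (imp (imp (imp e (add e e)) e) (imp (imp e (add e e)) (imp e x)))
              = imp (imp e (add e e)) (imp e x) := by
            have h := hoop (imp (imp e (add e e)) e) (imp (imp e (add e e)) (imp e x))
            rw [hcb', hP.add_zero] at h
            exact h
          have hs2 : add e
              (imp (imp (imp e (add e e)) e) (imp (imp e (add e e)) (imp e x)))
              = imp e x := by
            have h := congrArg (add (imp e (add e e))) hbg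
            rw [hs_ac, ← hP.add_assoc, he_ab] at h
            exact h
          have hx2 : add (add e e)
              (imp (imp (imp e (add e e)) e) (imp (imp e (add e e)) (imp e x)))
              = x := by
            have h := congrArg (add e) hs2
            rw [hx_es, ← hP.add_assoc] at h
            exact h
          have hq : imp
              (imp (imp (imp e (add e e)) e) (imp (imp e (add e e)) (imp e x)))
              (imp (add e e) x) = zero := by
            apply (hP.residuation _ (add e e) x).mp
            rw [hP.add_comm, hx2]
            exact hP.ge_refl x
          rw [c_eq] at hq
          rw [hw] at hq
          exact hae hq
    intro x
    exact hP.ge_antisymm _ _ (ge_add_left x (add e e)) (key (add x (add e e)))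
end

section
/- In any hoop H, the set J = { x ∈ H | x + x = x } of idempotent elements is the universe of a subhoop: 0 ∈ J, and J is closed under both + and →. Equivalently, with i(x) defined as x → (x + x), every hoop satisfies the identity i(x) → (i(y) → i(x → y)) = 0. -/
/-- In any hoop the set of idempotent elements is the universe of a subhoop:
0 is idempotent and the idempotents are closed under + and →.  Equivalently,
with i(x) := x → (x + x), the identity i(x) → (i(y) → i(x → y)) = 0 holds. -/
theorem idempotents_subhoop {P : Type*} (zero : P) (add imp : P → P → P)
    (hH : IsHoop zero add imp) :
    add zero zero = zero ∧
    (∀ x y : P, add x x = x → add y y = y → add (add x y) (add x y) = add x y) ∧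
    (∀ x y : P, add x x = x → add y y = y → add (imp x y) (imp x y) = imp x y) ∧
    (∀ x y : P,
      imp (imp x (add x x))
          (imp (imp y (add y y)) (imp (imp x y) (add (imp x y) (imp x y)))) = zero) := by
  obtain ⟨hP, hdiv⟩ := hH
  obtain ⟨hassoc, hcomm, haddz, hrefl, htrans, hanti, hmono, hgz, hres⟩ := hP
  letI : Std.Associative add := ⟨hassoc⟩
  letI : Std.Commutative add := ⟨hcomm⟩
  -- basic pocrim lemmas
  have ge_add : ∀ a b : P, imp (add a b) b = zero := by
    intro a b
    exact (hres a b b).mpr (by rw [hrefl b]; exact hgz a)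
  have ge_add' : ∀ a b : P, imp (add a b) a = zero := by
    intro a b; rw [hcomm a b]; exact ge_add b a
  have mp : ∀ a b : P, imp (add (imp a b) a) b = zero := by
    intro a b
    exact (hres (imp a b) a b).mpr (hrefl (imp a b))
  have mono_r : ∀ z a b : P, imp a b = zero → imp (imp z a) (imp z b) = zero := by
    intro z a b h
    exact (hres (imp z a) z b).mp (htrans _ _ _ (mp z a) h)
  -- divisibility from the hoop axiom
  have div : ∀ a b : P, imp b a = zero → add a (imp a b) = b := by
    intro a b h
    have hd := hdiv a b
    rwa [h, haddz] at hd
  -- L1 : (a → a+a) → (a+a)  ≥  a   (in fact equal)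
  have L1 : ∀ a : P, imp (imp (imp a (add a a)) (add a a)) a = zero := by
    intro a
    set va := imp a (add a a) with hva
    set z := imp va (add a a) with hz
    set k0 := imp va a with hk0
    set kp := imp k0 z with hkp
    have a0 : imp (add a a) a = zero := ge_add a a
    have a1 : imp (add z va) (add a a) = zero := by rw [hz]; exact mp va (add a a)
    have a2 : imp (add z va) a = zero := htrans _ _ _ a1 a0
    have a3 : imp z k0 = zero := by rw [hk0]; exact (hres z va a).mp a2
    have a4 : add k0 kp = z := by rw [hkp]; exact div k0 z a3
    have ava : imp a va = zero := by rw [hva]; exact (hres a a (add a a)).mp (hrefl (add a a))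
    have aF3 : add va k0 = a := by rw [hk0]; exact div va a ava
    have e : add (add k0 kp) va = add kp a := by
      have l : add (add k0 kp) va = add kp (add va k0) := by ac_rfl
      rw [l, aF3]
    rw [← a4, e] at a1
    have a6 : imp kp va = zero := by rw [hva]; exact (hres kp a (add a a)).mp a1
    have a7 := hmono kp va k0 a6
    rw [aF3] at a7
    rw [← a4, hcomm k0 kp]
    exact a7
  -- the main identity (part 4)
  have key : ∀ x y : P,
      imp (imp x (add x x))
        (imp (imp y (add y y)) (imp (imp x y) (add (imp x y) (imp x y)))) = zero := by
    intro x y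
    set t := imp x y with ht
    set u := imp x (add x x) with hu
    set v := imp y (add y y) with hv
    set c := imp t (add t t) with hc
    set k := imp c t with hk
    have F2 : imp t c = zero := by rw [hc]; exact (hres t t (add t t)).mp (hrefl (add t t))
    have F3 : add c k = t := by rw [hk]; exact div c t F2
    have F4 : add t c = add t t := by rw [hc]; exact div t (add t t) (ge_add t t)
    have F5 : add x u = add x x := by rw [hu]; exact div x (add x x) (ge_add x x)
    have F6 : add y v = add y y := by rw [hv]; exact div y (add y y) (ge_add y y)
    have F7 : imp (add t x) y = zero := by rw [ht]; exact mp x y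
    have F8 : imp (add k x) (imp c y) = zero := by
      apply (hres (add k x) c y).mp
      have e : add (add k x) c = add t x := by rw [← F3]; ac_rfl
      rw [e]; exact F7
    have F9 : imp (add (imp c y) v) (imp c (add y y)) = zero := by
      apply (hres (add (imp c y) v) c (add y y)).mp
      have h2 := hmono (add (imp c y) c) y v (mp c y)
      rw [F6] at h2
      have e : add (add (imp c y) v) c = add (add (imp c y) c) v := by ac_rfl
      rw [e]; exact h2
    have F10 : imp y t = zero := by rw [ht]; exact (hres y x y).mp (ge_add' y x)
    have F11 : imp (add y y) (add t t) = zero := by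
      have s1 := hmono y t y F10
      have s2 := hmono y t t F10
      rw [hcomm t y] at s1
      exact htrans _ _ _ s1 s2
    have F12 := mono_r c (add y y) (add t t) F11
    have F13 : imp (imp c (add t t)) t = zero := by rw [hc]; exact L1 t
    have F14 : imp (imp c (add y y)) t = zero := htrans _ _ _ F12 F13
    have S2 := hmono (add k x) (imp c y) v F8
    have S3 := htrans _ _ _ S2 F9
    have S4 : imp (add (add k x) v) t = zero := htrans _ _ _ S3 F14
    have S5 := hmono (add (add k x) v) t x S4
    have S6 : imp (add (add (add k x) v) x) y = zero := htrans _ _ _ S5 F7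
    have e2 : add (add (add u v) k) x = add (add (add k x) v) x := by
      have l : add (add (add u v) k) x = add (add v k) (add x u) := by ac_rfl
      have r : add (add (add k x) v) x = add (add v k) (add x x) := by ac_rfl
      rw [l, r, F5]
    have G1 : imp (add (add (add u v) k) x) y = zero := by rw [e2]; exact S6
    have G2 : imp (add (add u v) k) t = zero := by
      have g := (hres (add (add u v) k) x y).mp G1
      rwa [← ht] at g
    have G3 : imp (add (add u v) t) (add t t) = zero := by
      have e3 : add (add u v) t = add (add (add u v) k) c := by rw [← F3]; ac_rfl
      have m := hmono (add (add u v) k) t c G2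
      rw [F4] at m
      rw [e3]; exact m
    have G4 : imp (add u v) c = zero := by
      have g2 := (hres (add u v) t (add t t)).mp G3
      rwa [← hc] at g2
    exact (hres u v c).mp G4
  refine ⟨haddz zero, ?_, ?_, key⟩
  · intro x y hx hy
    have e : add (add x y) (add x y) = add (add x x) (add y y) := by ac_rfl
    rw [e, hx, hy]
  · intro x y hx hy
    have hux : imp x (add x x) = zero := by rw [hx]; exact hrefl x
    have hvy : imp y (add y y) = zero := by rw [hy]; exact hrefl y
    have h := key x y
    rw [hux, hvy] at h
    have z1 : imp zero (imp (imp x y) (add (imp x y) (imp x y))) = zero :=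
      hanti _ _ (hgz _) h
    have z2 : imp (imp x y) (add (imp x y) (imp x y)) = zero :=
      hanti _ _ (hgz _) z1
    exact hanti _ _ (ge_add (imp x y) (imp x y)) z2
end

section
/- For every positive natural number k, every bounded hoop satisfies the identity ¬(k·x) → (¬¬x → x) = 0, where k·x denotes the sum x + x + ⋯ + x with k summands. -/
/-- `iteratedSum add x k` is the sum x + x + ⋯ + x with k + 1 summands. -/
def iteratedSum {P : Type*} (add : P → P → P) (x : P) : ℕ → P
  | 0 => x
  | n + 1 => add x (iteratedSum add x n)

/-- For every positive natural number k, every bounded hoop satisfies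
¬(k·x) → (¬¬x → x) = 0, where k·x is the sum of k copies of x and ¬x = x → 1.
(Here `iteratedSum add x (k - 1)` has exactly k summands for k ≥ 1.) -/
theorem bounded_hoop_neg_ksum {P : Type*} (zero one : P) (add imp : P → P → P)
    (hH : IsHoop zero add imp)
    (hann : ∀ x : P, add x one = one) :
    ∀ (k : ℕ) (x : P),
      imp (imp (iteratedSum add x k) one)
          (imp (imp (imp x one) one) x) = zero := by
  obtain ⟨hP, hhoop⟩ := hH
  obtain ⟨assoc, comm, addz, hrefl, htrans, hanti, hmono, hgez, hres⟩ := hP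
  -- `imp a b = zero` is read as `a ≤ b` (a at least as true as b).
  -- `add` is conjunction (multiplication), `zero` is top/unit, `one` is bottom.
  -- a·(a→b) ≤ b
  have appl : ∀ a b : P, imp (add (imp a b) a) b = zero := fun a b =>
    (hres (imp a b) a b).mpr (hrefl (imp a b))
  -- a·b ≤ a  (i.e. their add x y ≥ y)
  have le_addr : ∀ a b : P, imp (add b a) a = zero := fun a b =>
    (hres b a a).mpr (by rw [hrefl]; exact hgez b)
  -- ⊥ ≤ a
  have bot_le : ∀ a : P, imp one a = zero := by
    intro a
    have h1 : imp (add one a) a = zero := le_addr a one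
    rwa [comm, hann a] at h1
  -- monotonicity on the right argument of add
  have monor : ∀ a b c : P, imp a b = zero → imp (add c a) (add c b) = zero := by
    intro a b c h
    have := hmono a b c h
    rwa [comm a c, comm b c] at this
  -- a ≤ b → b→c ≤ a→c
  have anti_left : ∀ a b c : P, imp a b = zero → imp (imp b c) (imp a c) = zero := by
    intro a b c h
    refine (hres (imp b c) a c).mp ?_
    refine htrans _ (add (imp b c) b) _ (monor a b (imp b c) h) (appl b c)
  -- c ≤ d → a→c ≤ a→d
  have mono_right : ∀ a c d : P, imp c d = zero → imp (imp a c) (imp a d) = zero := by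
    intro a c d h
    refine (hres (imp a c) a d).mp (htrans _ c _ (appl a c) h)
  -- negation
  -- x ≤ ¬¬x
  have le_nn : ∀ a : P, imp a (imp (imp a one) one) = zero := by
    intro a
    refine (hres a (imp a one) one).mp ?_
    rw [comm]; exact appl a one
  have neg_anti : ∀ a b : P, imp a b = zero → imp (imp b one) (imp a one) = zero :=
    fun a b h => anti_left a b one h
  -- ¬¬¬a ≤ ¬a
  have triple : ∀ a : P, imp (imp (imp (imp a one) one) one) (imp a one) = zero :=
    fun a => neg_anti a (imp (imp a one) one) (le_nn a)
  -- ¬¬ monotone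
  have nn_mono : ∀ a b : P, imp a b = zero →
      imp (imp (imp a one) one) (imp (imp b one) one) = zero :=
    fun a b h => neg_anti _ _ (neg_anti a b h)
  -- divisibility in a hoop: b ≤ a → a·(a→b) = b
  have div : ∀ a b : P, imp b a = zero → add a (imp a b) = b := by
    intro a b h
    rw [hhoop a b, h, addz]
  intro k x
  set nx : P := imp x one with hnx
  set n : P := imp nx one with hn
  set r : P := imp n x with hr
  -- x ≤ n
  have x_le_n : imp x n = zero := le_nn x
  -- n · r = x
  have hxnr : add n r = x := div n x x_le_n
  -- ¬x · n ≤ ⊥ :  add n nx ≤ one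
  have nnx_bot : imp (add n nx) one = zero := appl nx one
  -- ¬x ≤ r
  have negx_le_r : imp nx r = zero := by
    refine (hres nx n x).mp ?_
    rw [comm]
    exact htrans _ one _ nnx_bot (bot_le x)
  -- r→¬x ≤ ¬x
  have rimp : imp (imp r nx) nx = zero := by
    refine (hres (imp r nx) x one).mp ?_
    rw [← hxnr, ← assoc, comm (imp r nx) n, assoc]
    refine htrans _ (add n nx) _ (monor _ _ n (appl r nx)) nnx_bot
  -- ¬x = r · (r→¬x)
  have hnegx : add r (imp r nx) = nx := div r nx negx_le_r
  -- D : r→n ≤ n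
  have hD : imp (imp r n) n = zero := by
    refine (hres (imp r n) nx one).mp ?_
    rw [← hnegx, ← assoc]
    refine htrans _ (add n (imp r nx)) _ (hmono _ _ _ ?_) ?_
    · exact appl r n
    · refine htrans _ (add n nx) _ (monor _ _ n rimp) nnx_bot
  -- C : n→r ≤ r
  have hC : imp (imp n r) r = zero := by
    refine (hres (imp n r) n x).mp ?_
    rw [comm (imp n r) n, hhoop n r]
    refine htrans _ (add n r) _ ?_ (by rw [hxnr]; exact hrefl x)
    rw [comm r (imp r n)]
    exact hmono _ _ _ hD
  -- F : ¬(x·b) ≤ ¬(n·b)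
  have hF : ∀ b : P, imp (imp (add x b) one) (imp (add n b) one) = zero := by
    intro b
    set c : P := imp (add x b) one with hc
    set w : P := add b c with hw
    -- x ≤ ¬w
    have h1 : imp x (imp w one) = zero := by
      refine (hres x w one).mp ?_
      rw [hw, ← assoc, comm (add x b) c]
      exact appl (add x b) one
    -- n ≤ ¬w
    have h2 : imp n (imp w one) = zero :=
      htrans _ (imp (imp (imp w one) one) one) _ (nn_mono _ _ h1) (triple w)
    -- conclude
    have h3 : imp (add n w) one = zero := (hres n w one).mpr h2
    rw [hw, ← assoc, comm (add n b) c] at h3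
    exact (hres c (add n b) one).mp h3
  -- curry direction : ¬(n·b) ≤ n→¬b
  have curry : ∀ b : P, imp (imp (add n b) one) (imp n (imp b one)) = zero := by
    intro b
    refine (hres _ n (imp b one)).mp ?_
    refine (hres _ b one).mp ?_
    rw [assoc]
    exact appl (add n b) one
  -- main induction
  induction k with
  | zero => exact negx_le_r
  | succ k ih =>
      show imp (imp (add x (iteratedSum add x k)) one) r = zero
      refine htrans _ (imp (add n (iteratedSum add x k)) one) _ (hF _) ?_
      refine htrans _ (imp n (imp (iteratedSum add x k) one)) _ (curry _) ?_
      refine htrans _ (imp n r) _ (mono_right n _ _ ih) hC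
end

section
/- Every bounded pocrim satisfies ¬¬(a → b) ≥ ¬¬a → ¬¬b for all a, b; that is, ¬¬(a → b) → (¬¬a → ¬¬b) = 0. -/
/-- Every bounded pocrim satisfies ¬¬(a → b) ≥ ¬¬a → ¬¬b, i.e.
¬¬(a → b) → (¬¬a → ¬¬b) = 0, where ¬x = x → 1. -/
theorem bounded_pocrim_dn_imp {P : Type*} (zero one : P) (add imp : P → P → P)
    (hP : IsPocrim zero add imp)
    (hann : ∀ x : P, add x one = one) :
    ∀ a b : P,
      imp (imp (imp (imp a b) one) one)
          (imp (imp (imp a one) one) (imp (imp b one) one)) = zero := by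
  obtain ⟨hassoc, hcomm, hzero, hrefl, htrans, hanti, hmono, hge0, hres⟩ := hP
  intro a b
  -- modus ponens: (x→y) + x ≥ y
  have mp : ∀ x y : P, imp (add (imp x y) x) y = zero := fun x y =>
    (hres _ _ _).mpr (hrefl _)
  -- x + ¬x ≥ 1 (with ¬x = x→1 on the left of +)
  have pair : ∀ x : P, imp (add x (imp x one)) one = zero := by
    intro x
    have h := mp x one
    rwa [hcomm] at h
  -- x ≥ ¬¬x
  have dn : ∀ x : P, imp x (imp (imp x one) one) = zero := fun x =>
    (hres _ _ _).mp (pair x)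
  have monoR : ∀ x y z : P, imp x y = zero → imp (add z x) (add z y) = zero := by
    intro x y z h
    rw [hcomm z x, hcomm z y]
    exact hmono _ _ _ h
  have hAC : ∀ x y z : P, add (add x y) z = add (add x z) y := by
    intro x y z
    rw [hassoc, hcomm y z, ← hassoc]
  -- step 1: (a→b) + a + ¬b ≥ 1
  have t2 : imp (add (add (imp a b) a) (imp b one)) (add b (imp b one)) = zero :=
    hmono _ _ _ (mp a b)
  have t4 : imp (add (add (imp a b) a) (imp b one)) one = zero :=
    htrans _ _ _ t2 (pair b)
  have t4' : imp (add (add (imp a b) (imp b one)) a) one = zero := by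
    rwa [hAC]
  -- step 2: (a→b) + ¬b ≥ ¬a ≥ ¬¬¬a
  have s1 : imp (add (imp a b) (imp b one)) (imp a one) = zero :=
    (hres _ _ _).mp t4'
  have s2 : imp (add (imp a b) (imp b one)) (imp (imp (imp a one) one) one) = zero :=
    htrans _ _ _ s1 (dn (imp a one))
  -- step 3: (a→b) + ¬b + ¬¬a ≥ 1
  have s3 : imp (add (add (imp a b) (imp b one)) (imp (imp a one) one)) one = zero :=
    (hres _ _ _).mpr s2
  -- step 4: rearrange to (¬¬a + ¬b) + (a→b) ≥ 1, hence ¬¬a + ¬b ≥ ¬(a→b)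
  have s3' : imp (add (add (imp (imp a one) one) (imp b one)) (imp a b)) one = zero := by
    have e : add (add (imp (imp a one) one) (imp b one)) (imp a b)
        = add (add (imp a b) (imp b one)) (imp (imp a one) one) := by
      rw [hAC, hcomm (imp (imp a one) one) (imp a b), hassoc, hassoc,
        hcomm (imp (imp a one) one) (imp b one)]
    rwa [e]
  have s4 : imp (add (imp (imp a one) one) (imp b one)) (imp (imp a b) one) = zero :=
    (hres _ _ _).mp s3'
  -- step 5: ¬¬(a→b) + (¬¬a + ¬b) ≥ ¬¬(a→b) + ¬(a→b) ≥ 1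
  have s5 : imp (add (imp (imp (imp a b) one) one)
      (add (imp (imp a one) one) (imp b one))) one = zero := by
    have h1 := monoR _ _ (imp (imp (imp a b) one) one) s4
    exact htrans _ _ _ h1 (mp (imp (imp a b) one) one)
  -- step 6: residuation twice
  have s6 : imp (add (add (imp (imp (imp a b) one) one) (imp (imp a one) one))
      (imp b one)) one = zero := by
    rwa [hassoc]
  have s7 : imp (add (imp (imp (imp a b) one) one) (imp (imp a one) one))
      (imp (imp b one) one) = zero := (hres _ _ _).mp s6
  exact (hres _ _ _).mp s7
end

section
/- In any bounded hoop H, the image N = { ¬x | x ∈ H } of the negation map is the universe of an involutive subhoop: 0 ∈ N, 1 ∈ N, N is closed under + and under →, and every z ∈ N satisfies ¬¬z = z. -/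
/-- In any bounded hoop, the image N of the negation map ¬x = x → 1 is the
universe of an involutive subhoop: 0 ∈ N, 1 ∈ N, N is closed under + and →,
and every z ∈ N satisfies ¬¬z = z. -/
theorem bounded_hoop_neg_image_subhoop {P : Type*} (zero one : P) (add imp : P → P → P)
    (hH : IsHoop zero add imp)
    (hann : ∀ x : P, add x one = one) :
    zero ∈ Set.range (fun x => imp x one) ∧
    one ∈ Set.range (fun x => imp x one) ∧
    (∀ a b : P, a ∈ Set.range (fun x => imp x one) →
        b ∈ Set.range (fun x => imp x one) →
        add a b ∈ Set.range (fun x => imp x one)) ∧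
    (∀ a b : P, a ∈ Set.range (fun x => imp x one) →
        b ∈ Set.range (fun x => imp x one) →
        imp a b ∈ Set.range (fun x => imp x one)) ∧
    (∀ z ∈ Set.range (fun x => imp x one), imp (imp z one) one = z) := by
  obtain ⟨hp, hdiv⟩ := hH
  obtain ⟨assoc, comm, addz, lrefl, ltrans, lantisymm, mono, gz, resid⟩ := hp
  -- Notation (think of it as a BL-algebra with le x y meaning x ≤ y,
  -- add = strong conjunction ⊙, imp = residual, zero = ⊤, one = ⊥, imp · one = ¬).
  -- basic facts
  have mul_le_left : ∀ x y : P, imp (add x y) x = zero := by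
    intro x y
    have h := mono y zero x (gz y)
    rwa [comm y x, comm zero x, addz] at h
  have le_imp_self : ∀ x y : P, imp x (imp y x) = zero := by
    intro x y
    exact (resid x y x).mp (mul_le_left x y)
  have mul_mono_r : ∀ x y z : P, imp x y = zero → imp (add z x) (add z y) = zero := by
    intro x y z h
    have := mono x y z h
    rwa [comm x z, comm y z] at this
  have imp_mono_r : ∀ x y z : P, imp y z = zero → imp (imp x y) (imp x z) = zero := by
    intro x y z h
    refine (resid (imp x y) x z).mp ?_
    refine ltrans _ y _ ?_ h
    exact (resid (imp x y) x y).mpr (lrefl (imp x y))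
  have imp_anti_l : ∀ x y z : P, imp x y = zero → imp (imp y z) (imp x z) = zero := by
    intro x y z h
    refine (resid (imp y z) x z).mp ?_
    refine ltrans _ (add (imp y z) y) _ (mul_mono_r x y (imp y z) h) ?_
    exact (resid (imp y z) y z).mpr (lrefl (imp y z))
  have curry : ∀ x y z : P, imp (add x y) z = imp x (imp y z) := by
    intro x y z
    apply lantisymm
    · refine (resid _ x (imp y z)).mp ?_
      refine (resid _ y z).mp ?_
      rw [assoc]
      exact (resid _ (add x y) z).mpr (lrefl _)
    · refine (resid _ (add x y) z).mp ?_
      rw [← assoc]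
      refine (resid _ y z).mpr ?_
      exact (resid _ x (imp y z)).mpr (lrefl _)
  have le_dneg : ∀ x : P, imp x (imp (imp x one) one) = zero := by
    intro x
    refine (resid x (imp x one) one).mp ?_
    rw [comm]
    exact (resid (imp x one) x one).mpr (lrefl (imp x one))
  have triple_neg : ∀ x : P, imp (imp (imp x one) one) one = imp x one := by
    intro x
    apply lantisymm
    · exact imp_anti_l _ _ _ (le_dneg x)
    · exact le_dneg (imp x one)
  have bot_le : ∀ x : P, imp one x = zero := by
    intro x
    have h := mono one zero x (gz one)
    rwa [comm one x, hann x, comm zero x, addz] at h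
  -- the hard fact: for a, b in the range of negation, ¬¬(a + b) ≤ a + b.
  have div_consume : ∀ u v : P, imp v u = zero → add u (imp u v) = v := by
    intro u v h
    rw [hdiv u v, h, addz]
  have crux : ∀ x y : P,
      imp (imp (imp (add (imp x one) (imp y one)) one) one) (add (imp x one) (imp y one)) = zero := by
    intro x y
    set a := imp x one with ha
    set b := imp y one with hb
    have areg : imp (imp a one) one = a := triple_neg x
    have breg : imp (imp b one) one = b := triple_neg y
    set w := add a b with hw
    set W := imp (imp w one) one with hWdef
    -- goal : imp W w = zero
    show imp W w = zero
    have hwa : imp w a = zero := mul_le_left a b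
    have hwb : imp w b = zero := by rw [hw, comm]; exact mul_le_left b a
    have hWa : imp W a = zero := by
      have h1 := imp_anti_l w a one hwa
      have h2 := imp_anti_l _ _ one h1
      rwa [areg] at h2
    have hWb : imp W b = zero := by
      have h1 := imp_anti_l w b one hwb
      have h2 := imp_anti_l _ _ one h1
      rwa [breg] at h2
    have hw1 : imp w one = imp a (imp b one) := curry a b one
    have hw2 : imp w one = imp b (imp a one) := by
      rw [hw, comm a b]; exact curry b a one
    set M := imp (add a (imp w one)) one with hM
    set N := imp (add b (imp w one)) one with hN
    -- m = a ⊙ w' ≤ b' ;  n = b ⊙ w' ≤ a'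
    have hmb : imp (add a (imp w one)) (imp b one) = zero := by
      rw [hw1]
      have h0 := (resid (imp a (imp b one)) a (imp b one)).mpr (lrefl _)
      rwa [comm] at h0
    have hna : imp (add b (imp w one)) (imp a one) = zero := by
      rw [hw2]
      have h0 := (resid (imp b (imp a one)) b (imp a one)).mpr (lrefl _)
      rwa [comm] at h0
    -- b ≤ M, a ≤ N
    have hbM : imp b M = zero := by
      refine (resid b (add a (imp w one)) one).mp ?_
      refine ltrans _ (add b (imp b one)) _ (mul_mono_r _ _ b hmb) ?_
      exact (resid b (imp b one) one).mpr (le_dneg b)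
    have haN : imp a N = zero := by
      refine (resid a (add b (imp w one)) one).mp ?_
      refine ltrans _ (add a (imp a one)) _ (mul_mono_r _ _ a hna) ?_
      exact (resid a (imp a one) one).mpr (le_dneg a)
    -- W = a ⊙ M  and  W = b ⊙ N
    have hrep1 : add a M = W := by
      have h0 : add a (imp a W) = W := div_consume a W hWa
      rwa [hWdef, show imp a (imp (imp w one) one) = M by
        rw [hM, ← curry], ← hWdef] at h0
    have hrep2 : add b N = W := by
      have h0 : add b (imp b W) = W := div_consume b W hWb
      rwa [hWdef, show imp b (imp (imp w one) one) = N by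
        rw [hN, ← curry], ← hWdef] at h0
    -- W ⊙ (M → b) = w
    set k := imp M b with hk
    have hMk : add M k = b := div_consume M b hbM
    have hL10 : add W k = w := by
      rw [← hrep1, assoc, hMk]
    -- W ⊙ W ≤ w
    have hL11 : imp (add W W) w = zero := by
      have e1 : add (add a M) (add b N) = add (add a b) (add M N) := by
        rw [assoc a M (add b N), ← assoc M b N, comm M b, assoc b M N, ← assoc a b (add M N)]
      have e2 : add W W = add w (add M N) := by
        rw [hw, ← e1, hrep1, hrep2]
      rw [e2]
      exact mul_le_left w (add M N)
    set h := imp W w with hh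
    have hWh : imp W h = zero := (resid W W w).mp hL11
    have hkh : imp k h = zero := by
      refine (resid k W w).mp ?_
      rw [comm] at hL10
      rw [hL10]
      exact lrefl w
    -- w' ≤ h
    have hw'h : imp (imp w one) h = zero := by
      refine (resid (imp w one) W w).mp ?_
      refine ltrans _ one _ ?_ (bot_le w)
      have h0 := (resid W (imp w one) one).mpr (by rw [← hWdef]; exact lrefl W)
      rwa [comm] at h0
    -- h' ≤ W , h' ≤ k'
    have hh'W : imp (imp h one) W = zero := by
      have h1 := imp_anti_l (imp w one) h one hw'h
      rwa [← hWdef] at h1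
    have hh'k' : imp (imp h one) (imp k one) = zero := imp_anti_l k h one hkh
    -- W → k' = w'
    have hWk' : imp W (imp k one) = imp w one := by
      rw [← curry, hL10]
    -- h' ≤ one
    have hh'bot : imp (imp h one) one = zero := by
      have hglb : imp (imp h one) (add W (imp W (imp k one))) = zero := by
        have hz : add W (imp W (imp h one)) = imp h one := div_consume W (imp h one) hh'W
        have hmono := mul_mono_r _ _ W (imp_mono_r W (imp h one) (imp k one) hh'k')
        rwa [hz] at hmono
      rw [hWk'] at hglb
      refine ltrans _ (add W (imp w one)) _ hglb ?_
      exact (resid W (imp w one) one).mpr (by rw [← hWdef]; exact lrefl W)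
    -- c := h → W ; W = h ⊙ c
    set c := imp h W with hc
    have hrepc : add h c = W := div_consume h W hWh
    -- c ⊙ W' ≤ h'
    have hcW' : imp (add c (imp W one)) (imp h one) = zero := by
      refine (resid (add c (imp W one)) h one).mp ?_
      have e2 : add (add c (imp W one)) h = add W (imp W one) := by
        rw [comm c (imp W one), assoc (imp W one) c h, comm c h, hrepc, comm (imp W one) W]
      rw [e2]
      exact (resid W (imp W one) one).mpr (le_dneg W)
    have hcW'bot : imp (add c (imp W one)) one = zero :=
      ltrans _ _ _ hcW' hh'bot
    -- c ≤ W'' = W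
    have hcW : imp c W = zero := by
      have h1 := (resid c (imp W one) one).mp hcW'bot
      have hW'' : imp (imp W one) one = W := by
        rw [hWdef, triple_neg w]
      rwa [hW''] at h1
    -- W = h ⊙ c ≤ h ⊙ W = W ⊙ (W → w) = w
    have hfin : add W h = w := by
      have h0 : add W (imp W w) = w := div_consume W w (le_dneg w)
      rwa [← hh] at h0
    have hmono := mul_mono_r c W h hcW
    rw [hrepc, comm h W, hfin] at hmono
    exact hmono
  refine ⟨⟨one, lrefl one⟩, ⟨zero, ?_⟩, ?_, ?_, ?_⟩
  · -- ¬⊤ = ⊥ : imp zero one = one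
    show imp zero one = one
    apply lantisymm
    · have h := (resid (imp zero one) zero one).mpr (lrefl (imp zero one))
      rwa [addz] at h
    · exact bot_le _
  · -- closure under add
    rintro a b ⟨x, hx⟩ ⟨y, hy⟩
    refine ⟨imp (add a b) one, ?_⟩
    simp only at hx hy ⊢
    apply lantisymm
    · subst hx hy; exact crux x y
    · exact le_dneg (add a b)
  · -- closure under imp
    rintro a b ⟨x, hx⟩ ⟨y, hy⟩
    refine ⟨add a y, ?_⟩
    simp only at hx hy ⊢
    rw [curry, hy]
  · -- involution
    rintro z ⟨x, hx⟩
    simp only at hx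
    subst hx
    exact triple_neg x
end
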